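/- arXiv:math/9811074 — 7 statements merged into one kernel-verified Lean document; each statement's English description precedes it below -/
import Mathlib

section
/- Let P ⊆ ℝ³ be a measurable set, every point of which has distance at least 1.18 from the origin, and let T = {t·x : t ∈ [0,1], x ∈ P} be the cone over P with apex the origin (assumed measurable). Then vol(T ∩ B(0,1)) ≤ (1/1.18²)·vol(T); moreover 1/1.18² < δ_oct, so vol(T ∩ B(0,1)) ≤ δ_oct·vol(T). -/
open MeasureTheory Real Pointwise

noncomputable section

abbrev E3 : Type := EuclideanSpace ℝ (Fin 3)

/-- The density of the regular octahedron. -/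
def δoct : ℝ := (-3 * π + 12 * arccos (1 / Real.sqrt 3)) / Real.sqrt 8

lemma two_arcsin_eq : 2 * arcsin (1 / Real.sqrt 3) = π / 2 - arcsin (1 / 3) := by
  have h3 : (0:ℝ) < Real.sqrt 3 := Real.sqrt_pos.2 (by norm_num)
  have hle : (1:ℝ) / Real.sqrt 3 ≤ 1 := by
    rw [div_le_one h3]
    nlinarith [Real.sq_sqrt (by norm_num : (3:ℝ) ≥ 0), Real.sqrt_nonneg 3]
  have hnn : (0:ℝ) ≤ 1 / Real.sqrt 3 := by positivity
  have ha1 : 0 ≤ arcsin (1 / Real.sqrt 3) := arcsin_nonneg.2 hnn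
  have ha2 : arcsin (1 / Real.sqrt 3) ≤ π / 2 := arcsin_le_pi_div_two _
  have hb1 : 0 ≤ arcsin (1/3 : ℝ) := arcsin_nonneg.2 (by norm_num)
  have hb2 : arcsin (1/3 : ℝ) ≤ π / 2 := arcsin_le_pi_div_two _
  apply Real.injOn_cos
  · constructor <;> [linarith; linarith]
  · constructor <;> [linarith; linarith [pi_pos.le]]
  · have h13 : (1 / Real.sqrt 3 : ℝ)^2 = 1/3 := by
      rw [div_pow, one_pow, Real.sq_sqrt (by norm_num : (0:ℝ) ≤ 3)]
    rw [Real.cos_two_mul, Real.cos_arcsin, cos_pi_div_two_sub,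
      Real.sin_arcsin (by norm_num) (by norm_num),
      Real.sq_sqrt (by rw [h13]; norm_num : (0:ℝ) ≤ 1 - (1/Real.sqrt 3)^2), h13]
    norm_num

lemma δoct_eq : δoct = 6 * arcsin (1/3 : ℝ) / Real.sqrt 8 := by
  unfold δoct
  rw [arccos_eq_pi_div_two_sub_arcsin]
  have := two_arcsin_eq
  have h : 12 * (π / 2 - arcsin (1 / Real.sqrt 3)) = -3*π + 12 * arccos (1 / Real.sqrt 3) + 3*π - 0 := by
    rw [arccos_eq_pi_div_two_sub_arcsin]; ring
  have : arcsin (1 / Real.sqrt 3) = π/4 - arcsin (1/3)/2 := by linarith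
  rw [this]; ring

lemma arcsin_third_gt : (0.339 : ℝ) < arcsin (1/3 : ℝ) := by
  have hs : sin (0.339 : ℝ) < 1/3 := by
    have hb := Real.sin_bound (x := (0.339:ℝ)) (by rw [abs_of_nonneg] <;> norm_num)
    rw [abs_of_nonneg (by norm_num : (0:ℝ) ≤ 0.339)] at hb
    have := abs_le.1 hb
    norm_num at this ⊢
    linarith [this.2]
  calc (0.339 : ℝ) = arcsin (sin 0.339) := by
        rw [Real.arcsin_sin] <;> nlinarith [pi_gt_three]
    _ < arcsin (1/3) :=
        Real.strictMonoOn_arcsin ⟨by nlinarith [Real.neg_one_le_sin (0.339:ℝ)], (Real.sin_le_one _)⟩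
          ⟨by norm_num, by norm_num⟩ hs

lemma num_lt : (1 / 1.18 ^ 2 : ℝ) < δoct := by
  rw [δoct_eq]
  have h8 : Real.sqrt 8 < 2.8285 := by
    exact (Real.sqrt_lt' (by norm_num)).2 (by norm_num)
  have h8' : (0:ℝ) < Real.sqrt 8 := Real.sqrt_pos.2 (by norm_num)
  have := arcsin_third_gt
  rw [div_lt_div_iff₀ (by norm_num) h8']
  nlinarith

end

/-- Type 2 regions: the cone over a set whose points are at distance at least `1.18`
from the origin has density at most `1/1.18² < δ_oct`. -/
theorem cone_over_far_set_density_le (P : Set E3) (hP : MeasurableSet P)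
    (hfar : ∀ x ∈ P, (1.18 : ℝ) ≤ ‖x‖)
    (T : Set E3) (hT : T = {y : E3 | ∃ t ∈ Set.Icc (0 : ℝ) 1, ∃ x ∈ P, y = t • x})
    (hTm : MeasurableSet T) :
    volume (T ∩ Metric.closedBall 0 1) ≤ ENNReal.ofReal (1 / 1.18 ^ 2) * volume T ∧
    (1 / 1.18 ^ 2 : ℝ) < δoct ∧
    volume (T ∩ Metric.closedBall 0 1) ≤ ENNReal.ofReal δoct * volume T := by
  have hsub : T ∩ Metric.closedBall 0 1 ⊆ (1/1.18 : ℝ) • T := by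
    rintro y ⟨hyT, hyB⟩
    rw [hT] at hyT
    obtain ⟨t, ⟨ht0, ht1⟩, x, hxP, rfl⟩ := hyT
    have hx : (1.18:ℝ) ≤ ‖x‖ := hfar x hxP
    have hnorm : ‖t • x‖ = t * ‖x‖ := by
      rw [norm_smul, Real.norm_of_nonneg ht0]
    have hle1 : t * ‖x‖ ≤ 1 := by
      have := Metric.mem_closedBall.1 hyB
      rwa [dist_zero_right, hnorm] at this
    have ht118 : t * 1.18 ≤ 1 := by nlinarith
    refine ⟨(1.18 * t) • x, ?_, ?_⟩
    · rw [hT]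
      exact ⟨1.18 * t, ⟨by nlinarith, by nlinarith⟩, x, hxP, rfl⟩
    · show (1/1.18 : ℝ) • (1.18*t) • x = t • x
      rw [smul_smul]
      congr 1
      ring
  have hvol : volume ((1/1.18 : ℝ) • T) = ENNReal.ofReal ((1/1.18)^3) * volume T := by
    rw [Measure.addHaar_smul, finrank_euclideanSpace_fin]
    congr 1
    rw [abs_of_nonneg (by norm_num : (0:ℝ) ≤ (1/1.18:ℝ)^3)]
  have h1 : volume (T ∩ Metric.closedBall 0 1) ≤ ENNReal.ofReal (1 / 1.18 ^ 2) * volume T := by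
    calc volume (T ∩ Metric.closedBall 0 1) ≤ volume ((1/1.18 : ℝ) • T) := measure_mono hsub
      _ = ENNReal.ofReal ((1/1.18)^3) * volume T := hvol
      _ ≤ ENNReal.ofReal (1 / 1.18 ^ 2) * volume T := by
          gcongr
          norm_num
  refine ⟨h1, num_lt, h1.trans ?_⟩
  gcongr
  exact num_lt.le
end

section
/- For 1 ≤ h ≤ 1.18, let K_h ⊆ ℝ³ be the right circular cone with apex at the origin, axis the positive x₃-axis, height h, and base the disk of radius √(2−h²) at height h, i.e. K_h = {(x₁,x₂,x₃) : 0 ≤ x₃ ≤ h, h²·(x₁²+x₂²) ≤ (2−h²)·x₃²}. Then vol(K_h) = π(2−h²)h/3, vol(K_h ∩ B(0,1)) = (2π/3)·(1 − h/√2), so the density vol(K_h ∩ B(0,1))/vol(K_h) equals √2/(h² + h√2); this density is at most 2 − √2, with maximum attained at h = 1, and 2 − √2 < δ_oct. -/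
open MeasureTheory Real

/-!
The cone and its intersection with the unit ball are solids of revolution about the x₃-axis, so
by Fubini their volumes are `∫ π r(z)² dz`, with `r(z)²` the squared radius of the slice at height
`z`. For the cone `r(z)² = c z²` with `c = (2 - h²)/h²`; inside the unit ball
`r(z)² = min (c z²) (1 - z²)`, the two branches crossing at `z₀ = h/√2`, where `(1 + c) z₀² = 1`.
The bound `2 - √2 < δ_oct` comes down to `arccos (1/√3) ≥ 0.94`, i.e. `cos 0.94 ≥ 1/√3`, which
follows from the double-angle formula and `cos x ≥ 1 - x²/2`.
-/

noncomputable section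

lemma volume_disk (q : ℝ) :
    volume {y : Fin 2 → ℝ | y 0 ^ 2 + y 1 ^ 2 ≤ q} = ENNReal.ofReal (π * q) := by
  rcases lt_or_ge q 0 with hq | hq
  · have hempty : {y : Fin 2 → ℝ | y 0 ^ 2 + y 1 ^ 2 ≤ q} = ∅ :=
      Set.eq_empty_of_forall_notMem fun y hy => by
        have : 0 ≤ y 0 ^ 2 + y 1 ^ 2 := by positivity
        exact absurd (hy.trans_lt hq) this.not_gt
    rw [hempty, measure_empty, ENNReal.ofReal_of_nonpos (by nlinarith [pi_pos])]
  · have hball : (MeasurableEquiv.toLp 2 (Fin 2 → ℝ)).symm ⁻¹'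
        {y : Fin 2 → ℝ | y 0 ^ 2 + y 1 ^ 2 ≤ q} = Metric.closedBall 0 (√q) := by
      ext x
      rw [Metric.mem_closedBall, dist_zero_right, ← sq_le_sq₀ (norm_nonneg x) (sqrt_nonneg q),
        sq_sqrt hq, EuclideanSpace.real_norm_sq_eq, Fin.sum_univ_two]
      rfl
    rw [← (EuclideanSpace.volume_preserving_symm_measurableEquiv_toLp
        (Fin 2)).measure_preimage_equiv, hball, EuclideanSpace.volume_closedBall_fin_two,
      ← ENNReal.ofReal_pow (sqrt_nonneg q), sq_sqrt hq, ← ENNReal.ofReal_mul hq, mul_comm]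

def solidOfRevolution (a b : ℝ) (f : ℝ → ℝ) : Set E3 :=
  {x | x 2 ∈ Set.Icc a b ∧ x 0 ^ 2 + x 1 ^ 2 ≤ f (x 2)}

lemma volume_solidOfRevolution {f : ℝ → ℝ} (hf : Measurable f) (a b : ℝ) :
    volume (solidOfRevolution a b f) = ∫⁻ z in Set.Icc a b, ENNReal.ofReal (π * f z) := by
  -- `e` splits a point into its height `x 2` and its horizontal coordinates `(x 0, x 1)`.
  let e : E3 ≃ᵐ ℝ × (Fin 2 → ℝ) :=
    (MeasurableEquiv.toLp 2 (Fin 3 → ℝ)).symm.trans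
      (MeasurableEquiv.piFinSuccAbove (fun _ => ℝ) 2)
  have he : MeasurePreserving e volume (volume.prod volume) :=
    (volume_preserving_piFinSuccAbove (fun _ : Fin 3 => ℝ) 2).comp
      (EuclideanSpace.volume_preserving_symm_measurableEquiv_toLp (Fin 3))
  let T : Set (ℝ × (Fin 2 → ℝ)) := {p | p.1 ∈ Set.Icc a b ∧ p.2 0 ^ 2 + p.2 1 ^ 2 ≤ f p.1}
  have hT : MeasurableSet T :=
    (measurable_fst measurableSet_Icc).inter
      (measurableSet_le (by fun_prop) (hf.comp measurable_fst))
  have hslice (z : ℝ) : volume (Prod.mk z ⁻¹' T) =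
      (Set.Icc a b).indicator (fun z => ENNReal.ofReal (π * f z)) z := by
    by_cases hz : z ∈ Set.Icc a b
    · simp only [Set.indicator_of_mem hz, ← volume_disk]
      congr 1
      ext y
      exact and_iff_right hz
    · rw [Set.indicator_of_notMem hz,
        Set.eq_empty_of_forall_notMem (s := Prod.mk z ⁻¹' T) fun y hy => hz hy.1, measure_empty]
  have hpre : solidOfRevolution a b f = e ⁻¹' T := rfl
  rw [hpre, he.measure_preimage_equiv, Measure.prod_apply hT, lintegral_congr hslice,
    lintegral_indicator measurableSet_Icc]

lemma volume_solidOfRevolution_eq_ofReal_integral {f : ℝ → ℝ} (hf : Continuous f) {a b : ℝ}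
    (hab : a ≤ b) (hf₀ : ∀ z ∈ Set.Icc a b, 0 ≤ f z) :
    volume (solidOfRevolution a b f) = ENNReal.ofReal (∫ z in a..b, π * f z) := by
  rw [volume_solidOfRevolution hf.measurable, intervalIntegral.integral_of_le hab,
    ← integral_Icc_eq_integral_Ioc, ofReal_integral_eq_lintegral_ofReal
      (by fun_prop : Continuous fun z => π * f z).integrableOn_Icc
      ((ae_restrict_iff' measurableSet_Icc).2 <|
        .of_forall fun z hz => mul_nonneg pi_nonneg (hf₀ z hz))]

lemma volume_solidOfRevolution_cone {c t : ℝ} (hc : 0 ≤ c) (ht : 0 ≤ t) :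
    volume (solidOfRevolution 0 t fun z => c * z ^ 2) = ENNReal.ofReal (π * c * t ^ 3 / 3) := by
  rw [volume_solidOfRevolution_eq_ofReal_integral (by fun_prop) ht fun z _ => by positivity]
  simp only [← mul_assoc]
  rw [intervalIntegral.integral_const_mul, integral_pow]
  ring_nf

lemma volume_sphericalSector {c z₀ : ℝ} (hc : 0 ≤ c) (hz₀ : 0 ≤ z₀)
    (hcz : (1 + c) * z₀ ^ 2 = 1) :
    volume (solidOfRevolution 0 1 fun z => min (c * z ^ 2) (1 - z ^ 2)) =
      ENNReal.ofReal (2 * π / 3 * (1 - z₀)) := by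
  have hz₀1 : z₀ ≤ 1 := by nlinarith
  have hf : Continuous fun z : ℝ => π * min (c * z ^ 2) (1 - z ^ 2) := by fun_prop
  rw [volume_solidOfRevolution_eq_ofReal_integral (by fun_prop) zero_le_one
    fun z hz => le_min (by positivity) (by nlinarith [hz.1, hz.2])]
  have hcone : Set.EqOn (fun z => π * min (c * z ^ 2) (1 - z ^ 2)) (fun z => π * c * z ^ 2)
      (Set.uIcc 0 z₀) := by
    intro z hz
    obtain ⟨hz0, hzz₀⟩ : 0 ≤ z ∧ z ≤ z₀ := by rwa [Set.uIcc_of_le hz₀] at hz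
    have : (1 + c) * z ^ 2 ≤ (1 + c) * z₀ ^ 2 := by gcongr
    dsimp only
    rw [min_eq_left (by linarith), mul_assoc]
  have hsphere : Set.EqOn (fun z => π * min (c * z ^ 2) (1 - z ^ 2)) (fun z => π - π * z ^ 2)
      (Set.uIcc z₀ 1) := by
    intro z hz
    obtain ⟨hz₀z, -⟩ : z₀ ≤ z ∧ z ≤ 1 := by rwa [Set.uIcc_of_le hz₀1] at hz
    have : (1 + c) * z₀ ^ 2 ≤ (1 + c) * z ^ 2 := by gcongr
    dsimp only
    rw [min_eq_right (by linarith), mul_sub, mul_one]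
  rw [← intervalIntegral.integral_add_adjacent_intervals (hf.intervalIntegrable 0 z₀)
      (hf.intervalIntegrable z₀ 1), intervalIntegral.integral_congr hcone,
    intervalIntegral.integral_congr hsphere, intervalIntegral.integral_sub (by simp)
      ((by fun_prop : Continuous fun z : ℝ => π * z ^ 2).intervalIntegrable _ _)]
  simp only [intervalIntegral.integral_const_mul, integral_pow, intervalIntegral.integral_const,
    smul_eq_mul]
  congr 1
  linear_combination (π * z₀ / 3) * hcz

lemma mem_closedBall_zero_one_iff (x : E3) :
    x ∈ Metric.closedBall (0 : E3) 1 ↔ x 0 ^ 2 + x 1 ^ 2 + x 2 ^ 2 ≤ 1 := by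
  rw [mem_closedBall_zero_iff, ← sq_le_one_iff₀ (norm_nonneg x), EuclideanSpace.real_norm_sq_eq,
    Fin.sum_univ_three]

lemma solidOfRevolution_inter_closedBall {a t : ℝ} (f : ℝ → ℝ) (ht : 1 ≤ t) :
    solidOfRevolution a t f ∩ Metric.closedBall 0 1 =
      solidOfRevolution a 1 fun z => min (f z) (1 - z ^ 2) := by
  ext x
  simp only [solidOfRevolution, Set.mem_inter_iff, Set.mem_ofPred_eq, mem_closedBall_zero_one_iff,
    Set.mem_Icc, le_min_iff]
  constructor
  · rintro ⟨⟨⟨ha, -⟩, hf⟩, hball⟩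
    exact ⟨⟨ha, by nlinarith [sq_nonneg (x 0), sq_nonneg (x 1)]⟩, hf, by linarith⟩
  · rintro ⟨⟨ha, h1⟩, hf, hball⟩
    exact ⟨⟨⟨ha, h1.trans ht⟩, hf⟩, by linarith⟩

lemma setOf_cone_eq_solidOfRevolution {t : ℝ} (ht : 0 < t) (s : ℝ) :
    {x : E3 | 0 ≤ x 2 ∧ x 2 ≤ t ∧ t ^ 2 * (x 0 ^ 2 + x 1 ^ 2) ≤ s * x 2 ^ 2} =
      solidOfRevolution 0 t fun z => s / t ^ 2 * z ^ 2 := by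
  ext x
  simp only [solidOfRevolution, Set.mem_ofPred_eq, Set.mem_Icc, and_assoc, div_mul_eq_mul_div,
    le_div_iff₀ (pow_pos ht 2), mul_comm (t ^ 2)]

lemma cone_density_ratio {h : ℝ} (hh : 0 < h) (hh2 : h < √2) :
    2 * π / 3 * (1 - h / √2) / (π * (2 - h ^ 2) * h / 3) = √2 / (h ^ 2 + h * √2) := by
  have hs : √2 ^ 2 = 2 := sq_sqrt zero_le_two
  have hpos : 0 < 2 - h ^ 2 := by nlinarith
  rw [div_eq_div_iff (by positivity) (by positivity)]
  field_simp
  linear_combination h ^ 2 * hs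

lemma sqrt_two_div_one_add_sqrt_two : √2 / (1 ^ 2 + 1 * √2) = 2 - √2 := by
  rw [div_eq_iff (by positivity)]
  nlinarith [sq_sqrt (zero_le_two : (0 : ℝ) ≤ 2)]

lemma sqrt_two_div_sq_add_mul_sqrt_two_le {h : ℝ} (hh : 1 ≤ h) :
    √2 / (h ^ 2 + h * √2) ≤ 2 - √2 := by
  rw [← sqrt_two_div_one_add_sqrt_two]
  gcongr

lemma le_arccos_inv_sqrt_three : 0.94 ≤ arccos (1 / √3) := by
  have hcos : 1 / √3 ≤ cos 0.94 := by
    have hhalf := one_sub_sq_div_two_le_cos (x := 0.47)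
    have hdouble : cos 0.94 = 2 * cos 0.47 ^ 2 - 1 := by rw [← cos_two_mul]; norm_num
    have hsqrt : 1 / √3 ≤ 0.58 := by
      rw [div_le_iff₀ (by positivity)]
      nlinarith [sq_sqrt (show (0 : ℝ) ≤ 3 by norm_num), sqrt_nonneg 3]
    nlinarith
  calc (0.94 : ℝ) = arccos (cos 0.94) :=
        (arccos_cos (by norm_num) (by linarith [pi_gt_three])).symm
    _ ≤ arccos (1 / √3) := arccos_le_arccos hcos

lemma two_sub_sqrt_two_lt_δoct : 2 - √2 < δoct := by
  have h8 : √8 = 2 * √2 := by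
    rw [show (8 : ℝ) = 2 ^ 2 * 2 by norm_num, sqrt_mul (by positivity), sqrt_sq zero_le_two]
  have hs : √2 ^ 2 = 2 := sq_sqrt zero_le_two
  rw [δoct, h8, lt_div_iff₀ (by positivity)]
  nlinarith [le_arccos_inv_sqrt_three, pi_lt_d2, sqrt_nonneg 2]

/-- Type 3 regions: the right circular cone with apex at the origin, height
`h ∈ [1, 1.18]` and base a disk of radius `√(2-h²)` has density
`√2/(h² + h√2) ≤ 2 - √2 < δ_oct`, with the maximum at `h = 1`. -/
theorem cone_density (h : ℝ) (h1 : 1 ≤ h) (h2 : h ≤ 1.18) (K : Set E3)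
    (hK : K = {x : E3 | 0 ≤ x 2 ∧ x 2 ≤ h ∧
      h ^ 2 * ((x 0) ^ 2 + (x 1) ^ 2) ≤ (2 - h ^ 2) * (x 2) ^ 2}) :
    (volume K).toReal = π * (2 - h ^ 2) * h / 3 ∧
    (volume (K ∩ Metric.closedBall 0 1)).toReal = (2 * π / 3) * (1 - h / Real.sqrt 2) ∧
    (volume (K ∩ Metric.closedBall 0 1)).toReal / (volume K).toReal =
      Real.sqrt 2 / (h ^ 2 + h * Real.sqrt 2) ∧
    Real.sqrt 2 / (h ^ 2 + h * Real.sqrt 2) ≤ 2 - Real.sqrt 2 ∧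
    (h = 1 → Real.sqrt 2 / (h ^ 2 + h * Real.sqrt 2) = 2 - Real.sqrt 2) ∧
    2 - Real.sqrt 2 < δoct := by
  have hh : 0 < h := by linarith
  have hh2 : h < √2 := lt_sqrt_of_sq_lt (by nlinarith)
  have hc : 0 ≤ (2 - h ^ 2) / h ^ 2 := div_nonneg (by nlinarith) (sq_nonneg h)
  rw [setOf_cone_eq_solidOfRevolution hh] at hK
  have hvolK : (volume K).toReal = π * (2 - h ^ 2) * h / 3 := by
    rw [hK, volume_solidOfRevolution_cone hc hh.le,
      ENNReal.toReal_ofReal (by positivity)]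
    field_simp
  have hvolKB : (volume (K ∩ Metric.closedBall 0 1)).toReal = 2 * π / 3 * (1 - h / √2) := by
    have hcz : (1 + (2 - h ^ 2) / h ^ 2) * (h / √2) ^ 2 = 1 := by
      field_simp
      linear_combination -sq_sqrt (zero_le_two : (0 : ℝ) ≤ 2)
    have hz₀ : h / √2 ≤ 1 := (div_le_one (by positivity)).2 hh2.le
    rw [hK, solidOfRevolution_inter_closedBall _ h1, volume_sphericalSector hc (by positivity) hcz,
      ENNReal.toReal_ofReal (mul_nonneg (by positivity) (by linarith))]
  refine ⟨hvolK, hvolKB, ?_, sqrt_two_div_sq_add_mul_sqrt_two_le h1, ?_,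
    two_sub_sqrt_two_lt_δoct⟩
  · rw [hvolK, hvolKB]
    exact cone_density_ratio hh hh2
  · rintro rfl
    exact sqrt_two_div_one_add_sqrt_two
end
end

section
/- The Rogers simplex R(1, 2/√3, √2) has density exactly δ_oct: vol(R ∩ B(0,1)) = δ_oct·vol(R), where R = R(1, 2/√3, √2). -/
open MeasureTheory Real

noncomputable section

def pt3 (a b c : ℝ) : E3 := (WithLp.equiv 2 (Fin 3 → ℝ)).symm ![a, b, c]

/-- The Rogers simplex `R(a,b,c)`, with vertices `(0,0,0)`, `(a,0,0)`,
`(a, √(b²-a²), 0)`, `(a, √(b²-a²), √(c²-b²))`. -/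
def RogersSimplex (a b c : ℝ) : Set E3 :=
  convexHull ℝ ({pt3 0 0 0, pt3 a 0 0, pt3 a (Real.sqrt (b ^ 2 - a ^ 2)) 0,
    pt3 a (Real.sqrt (b ^ 2 - a ^ 2)) (Real.sqrt (c ^ 2 - b ^ 2))} : Set E3)

/-!
In coordinates `p = (x, y, z)` the simplex `R = R(1, 2/√3, √2)` is
`{(y, z) ∈ W, √3 y ≤ x ≤ 1}` over the wedge `W = {0 ≤ z ≤ √2 y}`, and `R ∩ B(0,1)` is
`{(y, z) ∈ W, √3 y ≤ x ≤ √(1 - y² - z²)}`. So both volumes are integrals over `W` of the length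
of an `x`-fibre, and in polar coordinates `(y, z) = ρ (cos θ, sin θ)`, `0 ≤ θ ≤ arctan √2`, the
radial integrals are elementary, with `k = √3 cos θ`:
`∫ ρ (1 - k ρ)₊ dρ = 1 / (6 k²)` and `∫ ρ (√(1 - ρ²) - k ρ)₊ dρ = (1 - k / √(1 + k²)) / 3`.
Integrating in `θ` (antiderivatives `tan θ` and `θ - arcsin (√3 sin θ / 2)`) gives
`vol R = √2 / 18` and `vol (R ∩ B) = (arctan √2 - π / 4) / 3`, and `arctan √2 = arccos (1 / √3)`.
-/

open Set
open scoped ENNReal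

theorem volume_prod_setOf_mem_Icc {α : Type*} [MeasurableSpace α] {μ : Measure α} [SFinite μ]
    {f g : α → ℝ} {s : Set α} (hf : Measurable f) (hg : Measurable g) (hs : MeasurableSet s) :
    (volume.prod μ) {p : ℝ × α | p.2 ∈ s ∧ p.1 ∈ Icc (f p.2) (g p.2)} =
      ∫⁻ y in s, ENNReal.ofReal (g y - f y) ∂μ := by
  have hmeas : MeasurableSet {p : ℝ × α | p.2 ∈ s ∧ p.1 ∈ Icc (f p.2) (g p.2)} :=
    (measurable_snd hs).inter ((measurableSet_le (hf.comp measurable_snd) measurable_fst).inter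
      (measurableSet_le measurable_fst (hg.comp measurable_snd)))
  rw [Measure.prod_apply_symm hmeas, ← lintegral_indicator hs]
  refine lintegral_congr fun y => ?_
  by_cases hy : y ∈ s
  · rw [indicator_of_mem hy, ← Real.volume_Icc]
    congr 1
    ext x
    simp [hy]
  · simp [hy]

theorem setLIntegral_Icc_ofReal_eq_integral {f : ℝ → ℝ} {a b : ℝ} (hab : a ≤ b)
    (hf : ContinuousOn f (Icc a b)) (hpos : ∀ x ∈ Icc a b, 0 ≤ f x) :
    ∫⁻ x in Icc a b, ENNReal.ofReal (f x) = ENNReal.ofReal (∫ x in a..b, f x) := by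
  rw [intervalIntegral.integral_of_le hab, ← integral_Icc_eq_integral_Ioc,
    ofReal_integral_eq_lintegral_ofReal hf.integrableOn_Icc
      (ae_restrict_of_forall_mem measurableSet_Icc hpos)]

theorem setLIntegral_Ioi_ofReal_eq_integral {f : ℝ → ℝ} {a b : ℝ} (hab : a ≤ b)
    (hf : ContinuousOn f (Icc a b)) (hpos : ∀ x ∈ Icc a b, 0 ≤ f x)
    (hneg : ∀ x, b < x → f x ≤ 0) :
    ∫⁻ x in Ioi a, ENNReal.ofReal (f x) = ENNReal.ofReal (∫ x in a..b, f x) := by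
  have hzero : ∫⁻ x in Ioi b, ENNReal.ofReal (f x) = 0 :=
    setLIntegral_eq_zero measurableSet_Ioi fun x hx => ENNReal.ofReal_eq_zero.2 (hneg x hx)
  rw [setLIntegral_congr Ioi_ae_eq_Ici, ← Icc_union_Ioi_eq_Ici hab,
    lintegral_union measurableSet_Ioi (disjoint_left.2 fun _ hx hx' => hx'.not_ge hx.2),
    hzero, add_zero, setLIntegral_Icc_ofReal_eq_integral hab hf hpos]

def wedge (k : ℝ) : Set (ℝ × ℝ) := {q | 0 ≤ q.2 ∧ q.2 ≤ k * q.1}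

theorem measurableSet_wedge (k : ℝ) : MeasurableSet (wedge k) :=
  (measurableSet_le measurable_const measurable_snd).inter
    (measurableSet_le measurable_snd (measurable_fst.const_mul k))

theorem cos_pos_of_mem_Icc_arctan {k θ : ℝ} (hθ : θ ∈ Icc 0 (arctan k)) : 0 < cos θ :=
  cos_pos_of_mem_Ioo ⟨by linarith [pi_pos, hθ.1], hθ.2.trans_lt (arctan_lt_pi_div_two k)⟩

theorem sin_nonneg_and_sin_le_mul_cos_iff {k θ : ℝ} (hk : 0 ≤ k) (hθ : θ ∈ Ioo (-π) π) :
    0 ≤ sin θ ∧ sin θ ≤ k * cos θ ↔ θ ∈ Icc 0 (arctan k) := by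
  constructor
  · rintro ⟨hsin, hle⟩
    have hθ₀ : 0 ≤ θ := by
      by_contra! h
      linarith [sin_neg_of_neg_of_neg_pi_lt h hθ.1]
    have hcos : 0 < cos θ := by
      by_contra! h
      have hθ_eq : θ = 0 := by
        rw [← sin_eq_zero_iff_of_lt_of_lt hθ.1 hθ.2]
        nlinarith
      norm_num [hθ_eq] at h
    have hθ₂ : θ < π / 2 := by
      by_contra! h
      linarith [cos_nonpos_of_pi_div_two_le_of_le h (by linarith [hθ.2])]
    refine ⟨hθ₀, ?_⟩
    rw [← arctan_tan (by linarith [pi_pos]) hθ₂, tan_eq_sin_div_cos]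
    exact arctan_strictMono.monotone ((div_le_iff₀ hcos).2 hle)
  · intro hθk
    have hcos := cos_pos_of_mem_Icc_arctan hθk
    have hθ₂ : θ < π / 2 := hθk.2.trans_lt (arctan_lt_pi_div_two k)
    refine ⟨sin_nonneg_of_nonneg_of_le_pi hθk.1 hθ.2.le, ?_⟩
    rw [← div_le_iff₀ hcos, ← tan_eq_sin_div_cos, ← tan_arctan k]
    exact strictMonoOn_tan.monotoneOn ⟨by linarith [hθk.1], hθ₂⟩
      ⟨neg_pi_div_two_lt_arctan k, arctan_lt_pi_div_two k⟩ hθk.2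

theorem lintegral_wedge_eq_polar {k : ℝ} (hk : 0 ≤ k) {f : ℝ × ℝ → ℝ≥0∞} (hf : Measurable f) :
    ∫⁻ q in wedge k, f q =
      ∫⁻ θ in Icc 0 (arctan k), ∫⁻ ρ in Ioi 0, ENNReal.ofReal ρ * f (ρ * cos θ, ρ * sin θ) := by
  have hpolar : ∀ p ∈ polarCoord.target,
      ENNReal.ofReal p.1 • (wedge k).indicator f (polarCoord.symm p) =
        (univ ×ˢ Icc 0 (arctan k)).indicator
          (fun p : ℝ × ℝ => ENNReal.ofReal p.1 * f (p.1 * cos p.2, p.1 * sin p.2)) p := by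
    rintro ⟨ρ, θ⟩ ⟨hρ, hθ⟩
    have hmem : (ρ * cos θ, ρ * sin θ) ∈ wedge k ↔ θ ∈ Icc 0 (arctan k) := by
      rw [← sin_nonneg_and_sin_le_mul_cos_iff hk hθ, wedge, mem_ofPred_eq, mul_left_comm,
        mul_le_mul_iff_right₀ hρ, mul_nonneg_iff_of_pos_left hρ]
    by_cases h : θ ∈ Icc 0 (arctan k)
    · simp [polarCoord_symm_apply, indicator_of_mem (hmem.2 h), h]
    · simp [polarCoord_symm_apply, indicator_of_notMem (mt hmem.1 h), h]
  have htarget : univ ×ˢ Icc 0 (arctan k) ∩ polarCoord.target = Ioi 0 ×ˢ Icc 0 (arctan k) := by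
    rw [polarCoord_target, prod_inter_prod, univ_inter, inter_eq_left.2]
    exact Icc_subset_Ioo (by linarith [pi_pos])
      ((arctan_lt_pi_div_two k).trans (by linarith [pi_pos]))
  rw [← lintegral_indicator (measurableSet_wedge k), ← lintegral_comp_polarCoord_symm,
    setLIntegral_congr_fun polarCoord.open_target.measurableSet hpolar,
    setLIntegral_indicator (MeasurableSet.univ.prod measurableSet_Icc), htarget,
    Measure.volume_eq_prod, ← Measure.prod_restrict, lintegral_prod_symm]
  exact (measurable_fst.ennreal_ofReal.mul (hf.comp (by fun_prop))).aemeasurable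

theorem lintegral_Ioi_mul_one_sub_mul {k : ℝ} (hk : 0 < k) :
    ∫⁻ ρ in Ioi 0, ENNReal.ofReal ρ * ENNReal.ofReal (1 - k * ρ) =
      ENNReal.ofReal (1 / (6 * k ^ 2)) := by
  have hF : ∀ ρ ∈ uIcc 0 k⁻¹,
      HasDerivAt (fun t => t ^ 2 / 2 - k * t ^ 3 / 3) (ρ * (1 - k * ρ)) ρ := fun ρ _ =>
    (((hasDerivAt_pow 2 ρ).div_const 2).sub
      (((hasDerivAt_pow 3 ρ).const_mul k).div_const 3)).congr_deriv (by ring)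
  rw [setLIntegral_congr_fun measurableSet_Ioi
      fun ρ (hρ : 0 < ρ) => (ENNReal.ofReal_mul hρ.le).symm,
    setLIntegral_Ioi_ofReal_eq_integral (f := fun ρ => ρ * (1 - k * ρ)) (inv_nonneg.2 hk.le)
      (by fun_prop)
      (fun ρ hρ => mul_nonneg hρ.1 (sub_nonneg.2 (by
        simpa [hk.ne'] using mul_le_mul_of_nonneg_left hρ.2 hk.le)))
      (fun ρ hρ => mul_nonpos_of_nonneg_of_nonpos ((inv_pos.2 hk).trans hρ).le
        (sub_nonpos.2 ((inv_lt_iff_one_lt_mul₀' hk).1 hρ).le)),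
    intervalIntegral.integral_eq_sub_of_hasDerivAt hF
      (Continuous.intervalIntegrable (by fun_prop) _ _)]
  congr 1
  field_simp
  ring

theorem hasDerivAt_sqrt_one_sub_sq_pow_three (k : ℝ) {ρ : ℝ} (hρ : 0 < 1 - ρ ^ 2) :
    HasDerivAt (fun t => -√(1 - t ^ 2) ^ 3 / 3 - k * t ^ 3 / 3)
      (ρ * (√(1 - ρ ^ 2) - k * ρ)) ρ := by
  have hsqrt : HasDerivAt (fun t => √(1 - t ^ 2)) (-ρ / √(1 - ρ ^ 2)) ρ :=
    ((hasDerivAt_pow 2 ρ).const_sub 1).sqrt hρ.ne' |>.congr_deriv (by ring)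
  refine (((hsqrt.fun_pow 3).neg.div_const 3).sub
    (((hasDerivAt_pow 3 ρ).const_mul k).div_const 3)).congr_deriv ?_
  have hs : 0 < √(1 - ρ ^ 2) := sqrt_pos.2 hρ
  field_simp
  ring

theorem lintegral_Ioi_mul_sqrt_one_sub_sq_sub_mul {k : ℝ} (hk : 0 ≤ k) :
    ∫⁻ ρ in Ioi 0, ENNReal.ofReal ρ * ENNReal.ofReal (√(1 - ρ ^ 2) - k * ρ) =
      ENNReal.ofReal ((1 - k / √(1 + k ^ 2)) / 3) := by
  set u := √(1 + k ^ 2)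
  have hu2 : u ^ 2 = 1 + k ^ 2 := sq_sqrt (by positivity)
  have hu1 : 1 ≤ u := by nlinarith [sqrt_nonneg (1 + k ^ 2)]
  have hu0 : 0 < u := by linarith
  -- `ρ = u⁻¹` is where the line `x = k ρ` meets the unit circle `x = √(1 - ρ²)`.
  have hbelow : ∀ ρ, 0 ≤ ρ → ρ ≤ u⁻¹ → k * ρ ≤ √(1 - ρ ^ 2) := by
    intro ρ hρ hρu
    have : ρ * u ≤ 1 := by simpa [hu0.ne'] using mul_le_mul_of_nonneg_right hρu hu0.le
    exact le_sqrt_of_sq_le (by nlinarith [mul_nonneg hρ hu0.le])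
  have habove : ∀ ρ, u⁻¹ < ρ → √(1 - ρ ^ 2) ≤ k * ρ := by
    intro ρ hρu
    have hρ : 0 < ρ := (inv_pos.2 hu0).trans hρu
    have : 1 < ρ * u := (inv_lt_iff_one_lt_mul₀ hu0).1 hρu
    exact (sqrt_le_left (by positivity)).2 (by nlinarith)
  have hF : ∀ ρ ∈ Ioo 0 u⁻¹, HasDerivAt (fun t => -√(1 - t ^ 2) ^ 3 / 3 - k * t ^ 3 / 3)
      (ρ * (√(1 - ρ ^ 2) - k * ρ)) ρ := by
    rintro ρ ⟨hρ₀, hρu⟩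
    have : ρ < 1 := hρu.trans_le (inv_le_one_of_one_le₀ hu1)
    exact hasDerivAt_sqrt_one_sub_sq_pow_three k (by nlinarith)
  have hsq : √(1 - u⁻¹ ^ 2) = k / u := by
    rw [show 1 - u⁻¹ ^ 2 = (k / u) ^ 2 by field_simp; linarith, sqrt_sq (by positivity)]
  rw [setLIntegral_congr_fun measurableSet_Ioi
      fun ρ (hρ : 0 < ρ) => (ENNReal.ofReal_mul hρ.le).symm,
    setLIntegral_Ioi_ofReal_eq_integral (inv_nonneg.2 hu0.le) (by fun_prop)
      (fun ρ hρ => mul_nonneg hρ.1 (sub_nonneg.2 (hbelow ρ hρ.1 hρ.2)))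
      (fun ρ hρ => mul_nonpos_of_nonneg_of_nonpos ((inv_pos.2 hu0).trans hρ).le
        (sub_nonpos.2 (habove ρ hρ))),
    intervalIntegral.integral_eq_sub_of_hasDerivAt_of_le (inv_nonneg.2 hu0.le) (by fun_prop) hF
      (Continuous.intervalIntegrable (by fun_prop) _ _), hsq]
  congr 1
  field_simp
  linear_combination k * hu2

theorem integral_one_div_cos_sq {a b : ℝ} (ha : a ∈ Ioo (-(π / 2)) (π / 2))
    (hb : b ∈ Ioo (-(π / 2)) (π / 2)) :
    ∫ θ in a..b, 1 / cos θ ^ 2 = tan b - tan a := by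
  have hcos : ∀ θ ∈ uIcc a b, cos θ ≠ 0 := fun θ hθ =>
    (cos_pos_of_mem_Ioo ((ordConnected_Ioo.uIcc_subset ha hb) hθ)).ne'
  exact intervalIntegral.integral_eq_sub_of_hasDerivAt (fun θ hθ => hasDerivAt_tan (hcos θ hθ))
    (ContinuousOn.intervalIntegrable (continuousOn_const.div (continuousOn_cos.pow 2)
      fun θ hθ => pow_ne_zero 2 (hcos θ hθ)))

theorem hasDerivAt_arcsin_mul_sin_div_sqrt (l θ : ℝ) :
    HasDerivAt (fun θ => arcsin (l * sin θ / √(1 + l ^ 2)))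
      (l * cos θ / √(1 + (l * cos θ) ^ 2)) θ := by
  set x := l * sin θ / √(1 + l ^ 2)
  have hx : 1 - x ^ 2 = (1 + (l * cos θ) ^ 2) / (1 + l ^ 2) := by
    rw [div_pow, sq_sqrt (by positivity)]
    field_simp
    linear_combination (-l ^ 2) * sin_sq_add_cos_sq θ
  have hx1 : |x| < 1 := by
    rw [← sq_lt_one_iff_abs_lt_one]
    linarith [show 0 < 1 - x ^ 2 by rw [hx]; positivity]
  refine ((hasDerivAt_arcsin (by linarith [neg_abs_le x]) (by linarith [le_abs_self x])).comp θ
      (((hasDerivAt_sin θ).const_mul l).div_const _)).congr_deriv ?_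
  have hc : 0 < √(1 + l ^ 2) := sqrt_pos.2 (by positivity)
  have hs : 0 < √(1 + (l * cos θ) ^ 2) := sqrt_pos.2 (by positivity)
  rw [hx, sqrt_div' _ (by positivity : (0:ℝ) ≤ 1 + l ^ 2)]
  field_simp

theorem continuous_mul_cos_div_sqrt_one_add_sq (l : ℝ) :
    Continuous fun θ => l * cos θ / √(1 + (l * cos θ) ^ 2) :=
  (continuous_const.mul continuous_cos).div (by fun_prop) fun _ => (sqrt_pos.2 (by positivity)).ne'

theorem integral_mul_cos_div_sqrt_one_add_sq (l a b : ℝ) :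
    ∫ θ in a..b, l * cos θ / √(1 + (l * cos θ) ^ 2) =
      arcsin (l * sin b / √(1 + l ^ 2)) - arcsin (l * sin a / √(1 + l ^ 2)) :=
  intervalIntegral.integral_eq_sub_of_hasDerivAt
    (fun θ _ => hasDerivAt_arcsin_mul_sin_div_sqrt l θ)
    ((continuous_mul_cos_div_sqrt_one_add_sq l).intervalIntegrable a b)

theorem integral_one_sub_sqrt_three_mul_cos_div :
    ∫ θ in (0)..arctan √2, (1 - √3 * cos θ / √(1 + (√3 * cos θ) ^ 2)) / 3 =
      (arctan √2 - π / 4) / 3 := by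
  have h4 : √(1 + √3 ^ 2) = 2 := by
    rw [sq_sqrt zero_le_three, show (1 + 3 : ℝ) = 2 ^ 2 by norm_num, sqrt_sq zero_le_two]
  have hsin : √3 * sin (arctan √2) / 2 = sin (π / 4) := by
    rw [sin_arctan, sin_pi_div_four, sq_sqrt zero_le_two, show (1 + 2 : ℝ) = 3 by norm_num,
      mul_div_cancel₀ _ (by positivity : √3 ≠ 0)]
  rw [intervalIntegral.integral_div, intervalIntegral.integral_sub intervalIntegrable_const
      ((continuous_mul_cos_div_sqrt_one_add_sq √3).intervalIntegrable _ _),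
    integral_mul_cos_div_sqrt_one_add_sq, intervalIntegral.integral_const, h4, hsin,
    arcsin_sin (by linarith [pi_pos]) (by linarith [pi_pos]), sin_zero]
  simp

namespace E3

def measurableEquivProd : E3 ≃ᵐ ℝ × (ℝ × ℝ) :=
  (MeasurableEquiv.toLp 2 (Fin 3 → ℝ)).symm.trans <|
    (MeasurableEquiv.piFinSuccAbove (fun _ : Fin 3 => ℝ) 0).trans <|
      (MeasurableEquiv.refl ℝ).prodCongr MeasurableEquiv.finTwoArrow

theorem measurePreserving_measurableEquivProd : MeasurePreserving measurableEquivProd :=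
  (EuclideanSpace.volume_preserving_symm_measurableEquiv_toLp (Fin 3)).trans <|
    (volume_preserving_piFinSuccAbove (fun _ : Fin 3 => ℝ) 0).trans <|
      (MeasurePreserving.id volume).prod (volume_preserving_finTwoArrow ℝ)

theorem volume_setOf_mem_Icc {f g : ℝ × ℝ → ℝ} {s : Set (ℝ × ℝ)} (hf : Measurable f)
    (hg : Measurable g) (hs : MeasurableSet s) :
    volume {p : E3 | (p 1, p 2) ∈ s ∧ p 0 ∈ Icc (f (p 1, p 2)) (g (p 1, p 2))} =
      ∫⁻ q in s, ENNReal.ofReal (g q - f q) := by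
  rw [← volume_prod_setOf_mem_Icc hf hg hs, ← Measure.volume_eq_prod,
    ← measurePreserving_measurableEquivProd.measure_preimage_equiv]
  rfl

theorem mem_closedBall_zero_one_iff (p : E3) :
    p ∈ Metric.closedBall 0 1 ↔ p 0 ^ 2 + p 1 ^ 2 + p 2 ^ 2 ≤ 1 := by
  rw [mem_closedBall_zero_iff, ← sq_le_one_iff₀ (norm_nonneg p), EuclideanSpace.real_norm_sq_eq,
    Fin.sum_univ_three]

end E3

@[simp] theorem pt3_apply_zero (a b c : ℝ) : pt3 a b c 0 = a := rfl
@[simp] theorem pt3_apply_one (a b c : ℝ) : pt3 a b c 1 = b := rfl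
@[simp] theorem pt3_apply_two (a b c : ℝ) : pt3 a b c 2 = c := rfl

theorem convexHull_orthoscheme {a b c : ℝ} (ha : 0 < a) (hb : 0 < b) (hc : 0 < c) :
    convexHull ℝ {pt3 0 0 0, pt3 a 0 0, pt3 a b 0, pt3 a b c} =
      {p : E3 | 0 ≤ p 2 ∧ b * p 2 ≤ c * p 1 ∧ a * p 1 ≤ b * p 0 ∧ p 0 ≤ a} := by
  apply Subset.antisymm
  · refine convexHull_min ?_ ?_
    · rintro p (rfl | rfl | rfl | rfl) <;>
        simp only [mem_ofPred_eq, pt3_apply_zero, pt3_apply_one, pt3_apply_two, mul_zero,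
          mul_comm, le_refl, and_self, and_true, true_and] <;>
        positivity
    · rintro p ⟨hp₁, hp₂, hp₃, hp₄⟩ q ⟨hq₁, hq₂, hq₃, hq₄⟩ s t hs ht hst
      simp only [mem_ofPred_eq, PiLp.add_apply, PiLp.smul_apply, smul_eq_mul]
      refine ⟨by positivity, ?_, ?_, ?_⟩ <;> nlinarith [mul_le_mul_of_nonneg_left hp₂ hs,
        mul_le_mul_of_nonneg_left hq₂ ht, mul_le_mul_of_nonneg_left hp₃ hs,
        mul_le_mul_of_nonneg_left hq₃ ht]
  · rintro p ⟨h₁, h₂, h₃, h₄⟩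
    set w := ![1 - p 0 / a, p 0 / a - p 1 / b, p 1 / b - p 2 / c, p 2 / c]
    set v := ![pt3 0 0 0, pt3 a 0 0, pt3 a b 0, pt3 a b c]
    have hw : ∑ i, w i = 1 := by simp [w, Fin.sum_univ_four]
    have hp : p = ∑ i, w i • v i := by
      ext j
      fin_cases j <;> simp [w, v, Fin.sum_univ_four] <;> field_simp <;> ring
    have hw₀ : ∀ i, 0 ≤ w i := by
      intro i
      fin_cases i
      · exact sub_nonneg.2 ((div_le_one ha).2 h₄)
      · exact sub_nonneg.2 ((div_le_div_iff₀ hb ha).2 (by linarith))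
      · exact sub_nonneg.2 ((div_le_div_iff₀ hc hb).2 (by linarith))
      · exact div_nonneg h₁ hc.le
    rw [hp]
    refine (convex_convexHull ℝ _).sum_mem (fun i _ => hw₀ i) hw
      fun i _ => subset_convexHull ℝ _ ?_
    fin_cases i <;> simp [v]

theorem rogersSimplex_eq :
    RogersSimplex 1 (2 / √3) √2 = {p : E3 | (p 1, p 2) ∈ wedge √2 ∧ p 0 ∈ Icc (√3 * p 1) 1} := by
  have h3 : 0 < √3 := by positivity
  have hb : √((2 / √3) ^ 2 - 1 ^ 2) = (√3)⁻¹ := by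
    rw [← sqrt_inv, div_pow, sq_sqrt zero_le_three]
    norm_num
  have hc : √(√2 ^ 2 - (2 / √3) ^ 2) = √2 * (√3)⁻¹ := by
    rw [← sqrt_inv, ← sqrt_mul zero_le_two, div_pow, sq_sqrt zero_le_three,
      sq_sqrt zero_le_two]
    norm_num
  rw [RogersSimplex, hb, hc, convexHull_orthoscheme one_pos (by positivity) (by positivity)]
  ext p
  simp only [wedge, mem_ofPred_eq, mem_Icc]
  rw [mul_comm √2, mul_assoc, mul_le_mul_iff_right₀ (inv_pos.2 h3), one_mul, ← div_eq_inv_mul,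
    le_div_iff₀ h3, mul_comm (p 1)]
  tauto

theorem rogersSimplex_inter_closedBall_eq :
    RogersSimplex 1 (2 / √3) √2 ∩ Metric.closedBall 0 1 =
      {p : E3 | (p 1, p 2) ∈ wedge √2 ∧ p 0 ∈ Icc (√3 * p 1) √(1 - p 1 ^ 2 - p 2 ^ 2)} := by
  ext p
  simp only [rogersSimplex_eq, mem_inter_iff, E3.mem_closedBall_zero_one_iff, wedge,
    mem_ofPred_eq, mem_Icc]
  constructor
  · rintro ⟨⟨hw, hx, -⟩, hball⟩
    exact ⟨hw, hx, le_sqrt_of_sq_le (by linarith)⟩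
  · rintro ⟨⟨h₀, h₁⟩, hx, hsqrt⟩
    have hp₁ : 0 ≤ p 1 := nonneg_of_mul_nonneg_right (h₀.trans h₁) (by positivity)
    have hp₀ : 0 ≤ p 0 := (mul_nonneg (sqrt_nonneg 3) hp₁).trans hx
    have hball : p 0 ^ 2 + p 1 ^ 2 + p 2 ^ 2 ≤ 1 := by
      rcases le_or_gt 0 (1 - p 1 ^ 2 - p 2 ^ 2) with hy | hy
      · nlinarith [pow_le_pow_left₀ hp₀ hsqrt 2, sq_sqrt hy]
      -- `√` of a negative number is `0`, which forces `p = 0`.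
      · rw [sqrt_eq_zero'.2 hy.le] at hsqrt
        have hp₁' : p 1 = 0 := le_antisymm (nonpos_of_mul_nonpos_right (hx.trans hsqrt)
          (by positivity)) hp₁
        rw [hp₁', mul_zero] at h₁
        nlinarith
    exact ⟨⟨⟨h₀, h₁⟩, hx, by nlinarith⟩, hball⟩

theorem volume_rogersSimplex :
    volume (RogersSimplex 1 (2 / √3) √2) = ENNReal.ofReal (√2 / 18) := by
  have hradial : ∀ θ ∈ Icc 0 (arctan √2),
      ∫⁻ ρ in Ioi 0, ENNReal.ofReal ρ * ENNReal.ofReal (1 - √3 * (ρ * cos θ)) =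
        ENNReal.ofReal (1 / 18 * (1 / cos θ ^ 2)) := by
    intro θ hθ
    have hcos := cos_pos_of_mem_Icc_arctan hθ
    simp_rw [← mul_assoc, mul_right_comm _ _ (cos θ)]
    rw [lintegral_Ioi_mul_one_sub_mul (by positivity), mul_pow, sq_sqrt zero_le_three]
    congr 1
    field_simp
    ring
  rw [rogersSimplex_eq, E3.volume_setOf_mem_Icc (f := fun q => √3 * q.1) (g := fun _ => 1)
      (by fun_prop) measurable_const (measurableSet_wedge _),
    lintegral_wedge_eq_polar (sqrt_nonneg 2) (by fun_prop),
    setLIntegral_congr_fun measurableSet_Icc hradial,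
    setLIntegral_Icc_ofReal_eq_integral (f := fun θ => 1 / 18 * (1 / cos θ ^ 2))
      (arctan_nonneg.2 (sqrt_nonneg 2))
      (continuousOn_const.mul (continuousOn_const.div (continuousOn_cos.pow 2)
        fun θ hθ => pow_ne_zero 2 (cos_pos_of_mem_Icc_arctan hθ).ne'))
      (fun θ _ => by positivity),
    intervalIntegral.integral_const_mul,
    integral_one_div_cos_sq ⟨by linarith [pi_pos], by linarith [pi_pos]⟩
      ⟨neg_pi_div_two_lt_arctan _, arctan_lt_pi_div_two _⟩, tan_arctan, tan_zero]
  ring_nf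

theorem volume_rogersSimplex_inter_closedBall :
    volume (RogersSimplex 1 (2 / √3) √2 ∩ Metric.closedBall 0 1) =
      ENNReal.ofReal ((arctan √2 - π / 4) / 3) := by
  have hradial : ∀ θ ∈ Icc 0 (arctan √2),
      ∫⁻ ρ in Ioi 0, ENNReal.ofReal ρ *
          ENNReal.ofReal (√(1 - (ρ * cos θ) ^ 2 - (ρ * sin θ) ^ 2) - √3 * (ρ * cos θ)) =
        ENNReal.ofReal ((1 - √3 * cos θ / √(1 + (√3 * cos θ) ^ 2)) / 3) := by
    intro θ hθ
    have hcos := cos_pos_of_mem_Icc_arctan hθ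
    have hnorm : ∀ ρ : ℝ, 1 - (ρ * cos θ) ^ 2 - (ρ * sin θ) ^ 2 = 1 - ρ ^ 2 := fun ρ => by
      linear_combination (-ρ ^ 2) * sin_sq_add_cos_sq θ
    simp_rw [hnorm, ← mul_assoc, mul_right_comm _ _ (cos θ)]
    exact lintegral_Ioi_mul_sqrt_one_sub_sq_sub_mul (by positivity)
  have hle : ∀ θ, √3 * cos θ / √(1 + (√3 * cos θ) ^ 2) ≤ 1 := fun θ =>
    div_le_one_of_le₀ (le_sqrt_of_sq_le (by linarith)) (sqrt_nonneg _)
  rw [rogersSimplex_inter_closedBall_eq,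
    E3.volume_setOf_mem_Icc (f := fun q => √3 * q.1) (g := fun q => √(1 - q.1 ^ 2 - q.2 ^ 2))
      (by fun_prop) (by fun_prop) (measurableSet_wedge _),
    lintegral_wedge_eq_polar (sqrt_nonneg 2) (by fun_prop),
    setLIntegral_congr_fun measurableSet_Icc hradial,
    setLIntegral_Icc_ofReal_eq_integral
      (f := fun θ => (1 - √3 * cos θ / √(1 + (√3 * cos θ) ^ 2)) / 3)
      (arctan_nonneg.2 (sqrt_nonneg 2))
      ((continuous_const.sub (continuous_mul_cos_div_sqrt_one_add_sq √3)).div_const 3).continuousOn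
      (fun θ _ => div_nonneg (sub_nonneg.2 (hle θ)) zero_le_three),
    integral_one_sub_sqrt_three_mul_cos_div]

theorem arccos_one_div_sqrt_three : arccos (1 / √3) = arctan √2 := by
  rw [← arccos_cos (arctan_nonneg.2 (sqrt_nonneg 2))
    ((arctan_lt_pi_div_two _).le.trans (by linarith [pi_pos])), cos_arctan, sq_sqrt zero_le_two]
  norm_num

/-- The Rogers simplex `R(1, 2/√3, √2)` has density exactly `δ_oct`. -/
theorem rogers_simplex_density_eq :
    (volume (RogersSimplex 1 (2 / Real.sqrt 3) (Real.sqrt 2) ∩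
        Metric.closedBall 0 1)).toReal =
      δoct * (volume (RogersSimplex 1 (2 / Real.sqrt 3) (Real.sqrt 2))).toReal := by
  have hπ : π / 4 ≤ arctan √2 := by
    rw [← arctan_one]
    exact arctan_strictMono.monotone (one_le_sqrt.2 one_le_two)
  have h8 : √8 = 2 * √2 := by
    rw [show (8 : ℝ) = 2 ^ 2 * 2 by norm_num, sqrt_mul' _ zero_le_two, sqrt_sq zero_le_two]
  rw [volume_rogersSimplex_inter_closedBall, volume_rogersSimplex,
    ENNReal.toReal_ofReal (by linarith), ENNReal.toReal_ofReal (by positivity), δoct,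
    arccos_one_div_sqrt_three, h8]
  field_simp
  ring
end
end

section
/- Let v, w ∈ ℝ³ satisfy |v| ≤ 2√2, |w| ≥ 2, and |w − v| ≥ 2. Then every point p on the segment from the origin 0 to v satisfies min(|p|, |p − v|) ≤ |p − w|. (In particular, no point between two packing centers at distance less than 2√2 can lie strictly in the Voronoi cell of a third center.) -/
/-! Write `p = (1 - t) x + t y` on a segment of length `d` and let `w` be a third point. The
Stewart-type identity `|p - w|² = (1 - t)|x - w|² + t|y - w|² - t(1 - t)d²` gives
`|p - w|² ≥ r² - t(1 - t)d²` once `x` and `y` are at distance at least `r` from `w`, while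
`min(|p - x|, |p - y|)² = min(t, 1 - t)² d²`. Since `min(t, 1 - t)² + t(1 - t) = min(t, 1 - t) ≤ 1/2`,
the claim follows as soon as `d² ≤ 2r²`. -/

open MeasureTheory Real

noncomputable section

section Segment

open AffineMap

variable {F : Type*} [NormedAddCommGroup F] [InnerProductSpace ℝ F]

theorem dist_lineMap_sq (x y w : F) (t : ℝ) :
    dist (lineMap x y t) w ^ 2 =
      (1 - t) * dist x w ^ 2 + t * dist y w ^ 2 - t * (1 - t) * dist x y ^ 2 := by
  have hp : lineMap x y t - w = (1 - t) • (x - w) + t • (y - w) := by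
    rw [lineMap_apply_module]; module
  have hxy : x - y = (x - w) - (y - w) := by abel
  simp only [dist_eq_norm, hp, hxy, norm_add_sq_real, norm_sub_sq_real, norm_smul,
    real_inner_smul_left, real_inner_smul_right, Real.norm_eq_abs, mul_pow, sq_abs]
  ring

theorem min_dist_le_dist_of_mem_segment {x y w p : F} {r : ℝ}
    (hxy : dist x y ≤ r * √2) (hxw : r ≤ dist x w) (hyw : r ≤ dist y w)
    (hp : p ∈ segment ℝ x y) :
    min (dist p x) (dist p y) ≤ dist p w := by
  rw [segment_eq_image_lineMap] at hp
  obtain ⟨t, ⟨ht₀, ht₁⟩, rfl⟩ := hp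
  set d := dist x y
  have hr : 0 ≤ r :=
    (mul_nonneg_iff_of_pos_right (by positivity : (0 : ℝ) < √2)).1 (dist_nonneg.trans hxy)
  have hd : d ^ 2 ≤ 2 * r ^ 2 := by
    calc d ^ 2 ≤ (r * √2) ^ 2 := pow_le_pow_left₀ dist_nonneg hxy 2
      _ = 2 * r ^ 2 := by rw [mul_pow, Real.sq_sqrt zero_le_two]; ring
  have hw : r ^ 2 - t * (1 - t) * d ^ 2 ≤ dist (lineMap x y t) w ^ 2 := by
    rw [dist_lineMap_sq]
    nlinarith [pow_le_pow_left₀ hr hxw 2, pow_le_pow_left₀ hr hyw 2]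
  rw [dist_lineMap_left, dist_lineMap_right, Real.norm_of_nonneg ht₀,
    Real.norm_of_nonneg (sub_nonneg.2 ht₁), ← min_mul_of_nonneg _ _ dist_nonneg,
    ← pow_le_pow_iff_left₀ (by positivity) dist_nonneg two_ne_zero]
  rcases le_total t (1 - t) with h | h
  · rw [min_eq_left h]; nlinarith
  · rw [min_eq_right h]; nlinarith

end Segment

/-- No point on the segment between two centers at distance at most `2√2` lies in the
Voronoi cell of a third center: if `|v| ≤ 2√2`, `|w| ≥ 2` and `|w - v| ≥ 2`, then
every `p ∈ [0, v]` satisfies `min (|p|, |p - v|) ≤ |p - w|`. -/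
theorem segment_point_not_in_third_voronoi_cell (v w : E3)
    (hv : ‖v‖ ≤ 2 * Real.sqrt 2) (hw : 2 ≤ ‖w‖) (hwv : 2 ≤ ‖w - v‖)
    (p : E3) (hp : p ∈ segment ℝ (0 : E3) v) :
    min ‖p‖ ‖p - v‖ ≤ ‖p - w‖ := by
  have h := min_dist_le_dist_of_mem_segment (w := w) (r := 2)
    (by rwa [dist_zero_left]) (by rwa [dist_zero_left]) (by rwa [dist_comm, dist_eq_norm]) hp
  simpa only [dist_eq_norm, sub_zero] using h
end
end

section
/- Let v, w ∈ ℝ³ satisfy |v| ≥ 2, |w − v| ≥ 2, and 2 ≤ |w| ≤ 2√2. If p is a point on the segment from the origin 0 to w that is equidistant from 0 and v (that is, |p| = |p − v|, equivalently ⟨p, v⟩ = |v|²/2), then |p| ≥ √2. The minimum value √2 is attained for the right triangle with |v| = 2, |w − v| = 2, |w| = 2√2. -/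
open MeasureTheory Real

noncomputable section

/-!
Write `p = t • w` with `t ≥ 0`. Equidistance from `0` and `v` reads `2 t ⟪w, v⟫ = ‖v‖²`, and
`‖w - v‖ ≥ 2` bounds `2 ⟪w, v⟫ ≤ ‖v‖² + ‖w‖² - 4`. Hence
`‖p‖ = t ‖w‖ ≥ ‖v‖² ‖w‖ / (‖v‖² + ‖w‖² - 4)`, and this is at least `√2` because
`a² b - √2 (a² + b² - 4) = (a² - 4)(b - √2) + √2 b (2√2 - b)` for `a = ‖v‖`, `b = ‖w‖`.
-/

theorem sqrt_two_mul_sq_add_sq_sub_four_le {a b : ℝ} (ha : 2 ≤ a) (hb : 2 ≤ b)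
    (hb' : b ≤ 2 * √2) : √2 * (a ^ 2 + b ^ 2 - 4) ≤ a ^ 2 * b := by
  have hsq : √2 ^ 2 = 2 := sq_sqrt zero_le_two
  have hlt : √2 < 2 := by rw [sqrt_lt' two_pos]; norm_num
  nlinarith [mul_nonneg (by nlinarith : 0 ≤ a ^ 2 - 4) (by linarith : 0 ≤ b - √2),
    mul_nonneg (mul_nonneg (sqrt_nonneg 2) (by linarith : 0 ≤ b)) (by linarith : 0 ≤ 2 * √2 - b)]

section InnerProductSpace

variable {F : Type*} [NormedAddCommGroup F] [InnerProductSpace ℝ F]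

theorem norm_eq_norm_sub_iff_two_mul_inner_eq {p v : F} :
    ‖p‖ = ‖p - v‖ ↔ 2 * inner ℝ p v = ‖v‖ ^ 2 := by
  rw [← sq_eq_sq₀ (norm_nonneg _) (norm_nonneg _), norm_sub_sq_real]
  constructor <;> intro h <;> linarith

theorem exists_nonneg_smul_of_mem_segment_zero {p w : F} (hp : p ∈ segment ℝ 0 w) :
    ∃ t : ℝ, 0 ≤ t ∧ p = t • w := by
  rw [segment_eq_image] at hp
  obtain ⟨t, ht, rfl⟩ := hp
  exact ⟨t, ht.1, by simp⟩

theorem sqrt_two_le_norm_of_mem_segment_of_norm_eq_norm_sub {v w p : F} (hv : 2 ≤ ‖v‖)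
    (hwv : 2 ≤ ‖w - v‖) (hw : 2 ≤ ‖w‖) (hw' : ‖w‖ ≤ 2 * √2) (hp : p ∈ segment ℝ 0 w)
    (hpv : ‖p‖ = ‖p - v‖) : √2 ≤ ‖p‖ := by
  obtain ⟨t, ht, rfl⟩ := exists_nonneg_smul_of_mem_segment_zero hp
  have hbisector : 2 * (t * inner ℝ w v) = ‖v‖ ^ 2 := by
    rw [← real_inner_smul_left]; exact norm_eq_norm_sub_iff_two_mul_inner_eq.1 hpv
  have hinner_le : 2 * inner ℝ w v ≤ ‖v‖ ^ 2 + ‖w‖ ^ 2 - 4 := by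
    nlinarith [norm_sub_sq_real w v]
  have hinner_pos : 0 < inner ℝ w v := by
    by_contra! h
    nlinarith [mul_nonpos_of_nonneg_of_nonpos ht h]
  rw [norm_smul, norm_of_nonneg ht]
  refine le_of_mul_le_mul_right ?_ (mul_pos two_pos hinner_pos)
  calc √2 * (2 * inner ℝ w v) ≤ √2 * (‖v‖ ^ 2 + ‖w‖ ^ 2 - 4) := by gcongr
    _ ≤ ‖v‖ ^ 2 * ‖w‖ := sqrt_two_mul_sq_add_sq_sub_four_le hv hw hw'
    _ = t * ‖w‖ * (2 * inner ℝ w v) := by rw [← hbisector]; ring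

end InnerProductSpace

theorem EuclideanSpace.norm_vec3 (x y z : ℝ) : ‖!₂[x, y, z]‖ = √(x ^ 2 + y ^ 2 + z ^ 2) := by
  simp [EuclideanSpace.norm_eq, Fin.sum_univ_three]

/-- If `|v| ≥ 2`, `|w - v| ≥ 2` and `2 ≤ |w| ≤ 2√2`, then any point `p` on the segment
from `0` to `w` equidistant from `0` and `v` satisfies `|p| ≥ √2`; the minimum `√2` is
attained for the right triangle with `|v| = 2`, `|w - v| = 2`, `|w| = 2√2`. -/
theorem bisector_point_on_segment_ge_sqrt_two :
    (∀ v w p : E3, 2 ≤ ‖v‖ → 2 ≤ ‖w - v‖ → 2 ≤ ‖w‖ → ‖w‖ ≤ 2 * Real.sqrt 2 →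
      p ∈ segment ℝ (0 : E3) w → ‖p‖ = ‖p - v‖ → Real.sqrt 2 ≤ ‖p‖) ∧
    (∃ v w p : E3, ‖v‖ = 2 ∧ ‖w - v‖ = 2 ∧ ‖w‖ = 2 * Real.sqrt 2 ∧
      p ∈ segment ℝ (0 : E3) w ∧ ‖p‖ = ‖p - v‖ ∧ ‖p‖ = Real.sqrt 2) := by
  refine ⟨fun v w p ↦ sqrt_two_le_norm_of_mem_segment_of_norm_eq_norm_sub, ?_⟩
  have hwv : (!₂[2, 2, 0] : E3) - !₂[2, 0, 0] = !₂[0, 2, 0] := by ext i; fin_cases i <;> simp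
  have hpv : (!₂[1, 1, 0] : E3) - !₂[2, 0, 0] = !₂[-1, 1, 0] := by
    ext i; fin_cases i <;> norm_num
  have hp : (!₂[1, 1, 0] : E3) ∈ segment ℝ 0 !₂[2, 2, 0] :=
    ⟨1 / 2, 1 / 2, by norm_num, by norm_num, by norm_num, by ext i; fin_cases i <;> simp⟩
  have hsqrt_eight : √8 = 2 * √2 := by
    rw [show (8 : ℝ) = 2 ^ 2 * 2 by norm_num, sqrt_mul (by norm_num), sqrt_sq (by norm_num)]
  refine ⟨!₂[2, 0, 0], !₂[2, 2, 0], !₂[1, 1, 0], ?_, ?_, ?_, hp, ?_, ?_⟩ <;>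
    simp only [hwv, hpv, EuclideanSpace.norm_vec3] <;> norm_num [hsqrt_eight]
end
end

section
/- Let a, b, c, d ∈ ℝ³ with c ≠ d be four points such that |a−b| = |a−c| = |a−d| = |b−c| = |b−d| = 2 (so the two faces abc and abd are equilateral triangles of side 2 sharing the edge ab), and suppose the simplex conv{a,b,c,d} has circumradius √2 (i.e., there is a point equidistant from a, b, c, d at distance √2). Then |c − d| = 2√2; that is, the simplex is congruent to S(2,2,2,2,2,2√2), the wedge of a regular octahedron of edge 2. -/
set_option maxHeartbeats 4000000

open MeasureTheory Real

noncomputable section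

open scoped RealInnerProductSpace

lemma perp_aux (x p q : E3) (hp : dist x p = Real.sqrt 2) (hq : dist x q = Real.sqrt 2)
    (hpq : dist p q = 2) : ⟪p - x, q - x⟫ = 0 := by
  have h2 : (Real.sqrt 2) ^ 2 = 2 := Real.sq_sqrt (by norm_num)
  have hp' : ‖p - x‖ = Real.sqrt 2 := by rw [← hp, dist_eq_norm, norm_sub_rev]
  have hq' : ‖q - x‖ = Real.sqrt 2 := by rw [← hq, dist_eq_norm, norm_sub_rev]
  have hs : ‖(p - x) - (q - x)‖ = 2 := by
    rw [show (p - x) - (q - x) = p - q by abel, ← dist_eq_norm, hpq]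
  have := norm_sub_sq_real (p - x) (q - x)
  rw [hs, hp', hq'] at this
  nlinarith [this]

/-- A simplex with two equilateral faces of side `2` sharing an edge and circumradius
`√2` is the wedge `S(2,2,2,2,2,2√2)` of a regular octahedron: `|c - d| = 2√2`. -/
theorem two_equilateral_faces_circumradius_sqrt_two (a b c d : E3) (hcd : c ≠ d)
    (hab : dist a b = 2) (hac : dist a c = 2) (had : dist a d = 2)
    (hbc : dist b c = 2) (hbd : dist b d = 2)
    (hrad : ∃ x : E3, dist x a = Real.sqrt 2 ∧ dist x b = Real.sqrt 2 ∧
      dist x c = Real.sqrt 2 ∧ dist x d = Real.sqrt 2) :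
    dist c d = 2 * Real.sqrt 2 := by
  obtain ⟨x, hxa, hxb, hxc, hxd⟩ := hrad
  have h2 : (Real.sqrt 2) ^ 2 = 2 := Real.sq_sqrt (by norm_num)
  set u := a - x with hu_def
  set v := b - x with hv_def
  set w := c - x with hw_def
  set z := d - x with hz_def
  have hnu : ‖u‖ = Real.sqrt 2 := by rw [hu_def, ← hxa, dist_eq_norm, norm_sub_rev]
  have hnv : ‖v‖ = Real.sqrt 2 := by rw [hv_def, ← hxb, dist_eq_norm, norm_sub_rev]
  have hnw : ‖w‖ = Real.sqrt 2 := by rw [hw_def, ← hxc, dist_eq_norm, norm_sub_rev]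
  have hnz : ‖z‖ = Real.sqrt 2 := by rw [hz_def, ← hxd, dist_eq_norm, norm_sub_rev]
  have huu : ⟪u, u⟫ = 2 := by rw [real_inner_self_eq_norm_sq, hnu, h2]
  have hvv : ⟪v, v⟫ = 2 := by rw [real_inner_self_eq_norm_sq, hnv, h2]
  have hww : ⟪w, w⟫ = 2 := by rw [real_inner_self_eq_norm_sq, hnw, h2]
  have hzz : ⟪z, z⟫ = 2 := by rw [real_inner_self_eq_norm_sq, hnz, h2]
  have huv : ⟪u, v⟫ = 0 := perp_aux x a b hxa hxb hab
  have huw : ⟪u, w⟫ = 0 := perp_aux x a c hxa hxc hac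
  have huz : ⟪u, z⟫ = 0 := perp_aux x a d hxa hxd had
  have hvw : ⟪v, w⟫ = 0 := perp_aux x b c hxb hxc hbc
  have hvz : ⟪v, z⟫ = 0 := perp_aux x b d hxb hxd hbd
  have hvu : ⟪v, u⟫ = 0 := (real_inner_comm u v) ▸ huv
  have hwu : ⟪w, u⟫ = 0 := (real_inner_comm u w) ▸ huw
  have hzu : ⟪z, u⟫ = 0 := (real_inner_comm u z) ▸ huz
  have hwv : ⟪w, v⟫ = 0 := (real_inner_comm v w) ▸ hvw
  have hzv : ⟪z, v⟫ = 0 := (real_inner_comm v z) ▸ hvz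
  set t := ⟪w, z⟫ with ht_def
  have hzw : ⟪z, w⟫ = t := real_inner_comm w z
  have ht_le : |t| ≤ 2 := by
    have := abs_real_inner_le_norm w z
    rw [hnw, hnz] at this
    nlinarith [this, h2]
  have hcdwz : c - d = w - z := by rw [hw_def, hz_def]; abel
  clear_value t u v w z
  -- t ≠ 2 since c ≠ d
  have ht_ne : t ≠ 2 := by
    intro h
    apply hcd
    have h0 : ⟪w - z, w - z⟫ = 0 := by
      simp only [inner_sub_left, inner_sub_right, hww, hzz, ← ht_def, hzw, h]
      ring
    have hwz : w - z = 0 := by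
      have h1 := real_inner_self_eq_norm_sq (w - z)
      rw [h0] at h1
      have : ‖w - z‖ = 0 := by nlinarith [norm_nonneg (w - z)]
      exact norm_eq_zero.mp this
    have : c - d = 0 := by rw [hcdwz]; exact hwz
    exact sub_eq_zero.mp this
  -- main claim: t = -2
  have ht : t = -2 := by
    by_contra hne
    have ht_lt : t ^ 2 < 4 := by
      rcases lt_or_eq_of_le ht_le with h | h
      · nlinarith [abs_nonneg t, sq_abs t, h]
      · rcases (abs_eq (by norm_num : (0:ℝ) ≤ 2)).mp h with h' | h'
        · exact absurd h' ht_ne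
        · exact absurd h' hne
    set z' := z - (t / 2) • w with hz'_def
    have hz'u : ⟪z', u⟫ = 0 := by
      simp only [hz'_def, inner_sub_left, real_inner_smul_left, hzu, hwu]
      ring
    have hz'v : ⟪z', v⟫ = 0 := by
      simp only [hz'_def, inner_sub_left, real_inner_smul_left, hzv, hwv]
      ring
    have hz'w : ⟪z', w⟫ = 0 := by
      simp only [hz'_def, inner_sub_left, real_inner_smul_left, hzw, hww]
      ring
    have huz' : ⟪u, z'⟫ = 0 := (real_inner_comm z' u) ▸ hz'u
    have hvz' : ⟪v, z'⟫ = 0 := (real_inner_comm z' v) ▸ hz'v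
    have hwz' : ⟪w, z'⟫ = 0 := (real_inner_comm z' w) ▸ hz'w
    have hz'z' : ⟪z', z'⟫ = 2 - t ^ 2 / 2 := by
      simp only [hz'_def, inner_sub_left, inner_sub_right, real_inner_smul_left,
        real_inner_smul_right, hww, hzz, ← ht_def, hzw]
      ring
    have hz'pos : 0 < ⟪z', z'⟫ := by rw [hz'z']; nlinarith
    have hz'ne : z' ≠ 0 := by
      intro h; rw [h, inner_zero_left] at hz'pos; exact lt_irrefl 0 hz'pos
    have hune : u ≠ 0 := by
      intro h; rw [h, inner_zero_left] at huu; norm_num at huu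
    have hvne : v ≠ 0 := by
      intro h; rw [h, inner_zero_left] at hvv; norm_num at hvv
    have hwne : w ≠ 0 := by
      intro h; rw [h, inner_zero_left] at hww; norm_num at hww
    clear_value z'
    set f : Fin 4 → E3 := ![u, v, w, z'] with hf_def
    have hf0 : f 0 = u := rfl
    have hf1 : f 1 = v := rfl
    have hf2 : f 2 = w := rfl
    have hf3 : f 3 = z' := rfl
    have hfz : ∀ i, f i ≠ 0 := by
      intro i
      fin_cases i
      · exact hune
      · exact hvne
      · exact hwne
      · exact hz'ne
    have hfo : Pairwise fun i j => ⟪f i, f j⟫ = 0 := by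
      intro i j hij
      fin_cases i <;> fin_cases j <;>
        first
          | exact absurd rfl hij
          | exact huv | exact huw | exact huz'
          | exact hvu | exact hvw | exact hvz'
          | exact hwu | exact hwv | exact hwz'
          | exact hz'u | exact hz'v | exact hz'w
    have hli : LinearIndependent ℝ f := linearIndependent_of_ne_zero_of_inner_eq_zero hfz hfo
    have hcard := hli.fintype_card_le_finrank
    rw [finrank_euclideanSpace_fin] at hcard
    simp at hcard
  -- conclude
  have hcd8 : dist c d ^ 2 = 8 := by
    rw [dist_eq_norm, hcdwz, ← real_inner_self_eq_norm_sq]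
    simp only [inner_sub_left, inner_sub_right, hww, hzz, ← ht_def, hzw, ht]
    ring
  have hsq : dist c d = Real.sqrt 8 := by
    rw [← hcd8, Real.sqrt_sq dist_nonneg]
  rw [hsq, show (8:ℝ) = (2 * Real.sqrt 2) ^ 2 by nlinarith [h2]]
  exact Real.sqrt_sq (by positivity)
end
end

section
/- Define the polynomial Δ(x₁,x₂,x₃,x₄,x₅,x₆) = x₁x₄(−x₁+x₂+x₃−x₄+x₅+x₆) + x₂x₅(x₁−x₂+x₃+x₄−x₅+x₆) + x₃x₆(x₁+x₂−x₃+x₄+x₅−x₆) − x₂x₃x₄ − x₁x₃x₅ − x₁x₂x₆ − x₄x₅x₆. For all x₁ ∈ [8 − 0.006, 8] and x₂, x₃, x₄, x₅, x₆ ∈ [4, 4.006], one has Δ(x₁,x₂,x₃,x₄,x₅,x₆) ≥ Δ(8,4,4,x₄,4,4) = 128 − 8(x₄−4)². In particular, √Δ/2 ≥ 5.628 on this box. -/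
open Real

noncomputable section

lemma key_delta_aux (a b c d e f : ℝ) (ha : 0 ≤ a) (ha' : a ≤ 0.006)
    (hb : 0 ≤ b) (hb' : b ≤ 0.006) (hc : 0 ≤ c) (hc' : c ≤ 0.006)
    (hd : 0 ≤ d) (_hd' : d ≤ 0.006) (he : 0 ≤ e) (he' : e ≤ 0.006)
    (hf : 0 ≤ f) (hf' : f ≤ 0.006) :
    0 ≤ 32*(b+c+e+f) + 16*a - 4*(b^2+c^2+e^2+f^2) - 4*a^2
      + 4*e*f + 8*d*f + 8*d*e - d*e*f
      + 4*c*f - c*f^2 + c*e*f + 8*c*d + c*d*f - c^2*f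
      + 4*b*e + b*e*f - b*e^2 - b^2*e + 8*b*d + b*d*e + 4*b*c + b*c*f + b*c*e - b*c*d
      - 4*a*f - 4*a*e + 8*a*d - a*d*f - a*d*e + a*d^2 - 4*a*c - a*c*f + a*c*e
      - a*c*d - 4*a*b + a*b*f - a*b*e - a*b*d - a^2*d := by
  linarith [mul_nonneg (by linarith : (0:ℝ) ≤ 0.006 - a) ha,
    mul_nonneg (by linarith : (0:ℝ) ≤ 0.006 - b) hb,
    mul_nonneg (by linarith : (0:ℝ) ≤ 0.006 - c) hc,
    mul_nonneg (by linarith : (0:ℝ) ≤ 0.006 - e) he,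
    mul_nonneg (by linarith : (0:ℝ) ≤ 0.006 - f) hf,
    mul_nonneg (by linarith : (0:ℝ) ≤ 0.006 - a) hb,
    mul_nonneg (by linarith : (0:ℝ) ≤ 0.006 - a) hc,
    mul_nonneg (by linarith : (0:ℝ) ≤ 0.006 - a) he,
    mul_nonneg (by linarith : (0:ℝ) ≤ 0.006 - a) hf,
    mul_nonneg (by linarith : (0:ℝ) ≤ 0.006 - f) (mul_nonneg hd he),
    mul_nonneg (by linarith : (0:ℝ) ≤ 0.006 - f) (mul_nonneg hc hf),
    mul_nonneg (by linarith : (0:ℝ) ≤ 0.006 - c) (mul_nonneg hc hf),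
    mul_nonneg (by linarith : (0:ℝ) ≤ 0.006 - e) (mul_nonneg hb he),
    mul_nonneg (by linarith : (0:ℝ) ≤ 0.006 - b) (mul_nonneg hb he),
    mul_nonneg (by linarith : (0:ℝ) ≤ 0.006 - c) (mul_nonneg hb hd),
    mul_nonneg (by linarith : (0:ℝ) ≤ 0.006 - f) (mul_nonneg ha hd),
    mul_nonneg (by linarith : (0:ℝ) ≤ 0.006 - e) (mul_nonneg ha hd),
    mul_nonneg (by linarith : (0:ℝ) ≤ 0.006 - c) (mul_nonneg ha hd),
    mul_nonneg (by linarith : (0:ℝ) ≤ 0.006 - b) (mul_nonneg ha hd),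
    mul_nonneg (by linarith : (0:ℝ) ≤ 0.006 - a) (mul_nonneg ha hd),
    mul_nonneg (by linarith : (0:ℝ) ≤ 0.006 - a) (mul_nonneg hc hf),
    mul_nonneg (by linarith : (0:ℝ) ≤ 0.006 - a) (mul_nonneg hb he),
    mul_nonneg hd he, mul_nonneg hd hf, mul_nonneg he hf, mul_nonneg hc hd,
    mul_nonneg hc hf, mul_nonneg hb hd, mul_nonneg hb he, mul_nonneg hb hc,
    mul_nonneg ha hd,
    mul_nonneg (mul_nonneg hb hc) hf, mul_nonneg (mul_nonneg hb hc) he,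
    mul_nonneg (mul_nonneg hc he) hf, mul_nonneg (mul_nonneg hb he) hf,
    mul_nonneg (mul_nonneg hc hd) hf, mul_nonneg (mul_nonneg hb hd) he,
    mul_nonneg (mul_nonneg ha hc) he, mul_nonneg (mul_nonneg ha hb) hf,
    mul_nonneg (mul_nonneg ha hd) hd]

/-- The polynomial `Δ` in the six squared edge lengths of a simplex
(`144 · vol(S)² = Δ`). -/
def Δpoly (x₁ x₂ x₃ x₄ x₅ x₆ : ℝ) : ℝ :=
  x₁ * x₄ * (-x₁ + x₂ + x₃ - x₄ + x₅ + x₆) + x₂ * x₅ * (x₁ - x₂ + x₃ + x₄ - x₅ + x₆) +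
    x₃ * x₆ * (x₁ + x₂ - x₃ + x₄ + x₅ - x₆) -
    x₂ * x₃ * x₄ - x₁ * x₃ * x₅ - x₁ * x₂ * x₆ - x₄ * x₅ * x₆

/-- On the box `x₁ ∈ [8 - 0.006, 8]`, `x₂,…,x₆ ∈ [4, 4.006]` one has
`Δ ≥ Δ(8,4,4,x₄,4,4) = 128 - 8(x₄ - 4)²`, and hence `√Δ/2 ≥ 5.628`. -/
theorem delta_lower_bound (x₁ x₂ x₃ x₄ x₅ x₆ : ℝ)
    (h₁ : x₁ ∈ Set.Icc (8 - 0.006 : ℝ) 8) (h₂ : x₂ ∈ Set.Icc (4 : ℝ) 4.006)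
    (h₃ : x₃ ∈ Set.Icc (4 : ℝ) 4.006) (h₄ : x₄ ∈ Set.Icc (4 : ℝ) 4.006)
    (h₅ : x₅ ∈ Set.Icc (4 : ℝ) 4.006) (h₆ : x₆ ∈ Set.Icc (4 : ℝ) 4.006) :
    Δpoly 8 4 4 x₄ 4 4 ≤ Δpoly x₁ x₂ x₃ x₄ x₅ x₆ ∧
    Δpoly 8 4 4 x₄ 4 4 = 128 - 8 * (x₄ - 4) ^ 2 ∧
    5.628 ≤ Real.sqrt (Δpoly x₁ x₂ x₃ x₄ x₅ x₆) / 2 := by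
  obtain ⟨a1, b1⟩ := h₁; obtain ⟨a2, b2⟩ := h₂; obtain ⟨a3, b3⟩ := h₃
  obtain ⟨a4, b4⟩ := h₄; obtain ⟨a5, b5⟩ := h₅; obtain ⟨a6, b6⟩ := h₆
  have hk := key_delta_aux (8 - x₁) (x₂ - 4) (x₃ - 4) (x₄ - 4) (x₅ - 4) (x₆ - 4)
    (by linarith) (by linarith) (by linarith) (by linarith) (by linarith) (by linarith)
    (by linarith) (by linarith) (by linarith) (by linarith) (by linarith) (by linarith)
  have hmain : Δpoly 8 4 4 x₄ 4 4 ≤ Δpoly x₁ x₂ x₃ x₄ x₅ x₆ := by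
    unfold Δpoly; nlinarith [hk]
  have heq : Δpoly 8 4 4 x₄ 4 4 = 128 - 8 * (x₄ - 4) ^ 2 := by unfold Δpoly; ring
  refine ⟨hmain, heq, ?_⟩
  have hΔ : (11.256 : ℝ) ^ 2 ≤ Δpoly x₁ x₂ x₃ x₄ x₅ x₆ := by
    rw [heq] at hmain
    nlinarith [sq_nonneg (x₄ - 4), mul_nonneg (by linarith : (0:ℝ) ≤ x₄ - 4)
      (by linarith : (0:ℝ) ≤ 4.006 - x₄)]
  have hs : (11.256 : ℝ) ≤ Real.sqrt (Δpoly x₁ x₂ x₃ x₄ x₅ x₆) := by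
    rw [show (11.256 : ℝ) = Real.sqrt (11.256 ^ 2) from
      (Real.sqrt_sq (by norm_num)).symm]
    exact Real.sqrt_le_sqrt hΔ
  linarith
end
end
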